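/- Let V = {v^{(1)}, v^{(2)}} ⊂ (ℂ*)^2 be two points with associated affine polynomials g_j^{(i)} for j ∈ {0,1,2}, i ∈ {1,2}. Then the family of nine degree-two polynomials {g_j^{(1)} g_r^{(2)} : j, r ∈ {0,1,2}} has the property that the intersection of their amoebas equals {Log(v^{(1)}), Log(v^{(2)})}, and each of these polynomials vanishes on V. -/

import Mathlib

open Finset

/-- The coordinatewise log-modulus map. -/
noncomputable def Log {n : ℕ} (z : Fin n → ℂ) : Fin n → ℝ :=
  fun k => Real.log ‖z k‖

/-- The amoeba of a polynomial function on the complex torus: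
the image under `Log` of its zero set in `(ℂ*)^n`. -/
noncomputable def amoeba {n : ℕ} (f : (Fin n → ℂ) → ℂ) : Set (Fin n → ℝ) :=
  Log '' {z | (∀ k, z k ≠ 0) ∧ f z = 0}

/-- `‖v‖₀ = ∑ₖ |vₖ|`. -/
noncomputable def norm0 {n : ℕ} (v : Fin n → ℂ) : ℝ := ∑ k, ‖v k‖

/-- `g₀(z) = 1 - (1/‖v‖₀) ∑ₖ (|vₖ|/vₖ) zₖ`, the polynomial of Nisse's construction. -/
noncomputable def gzero {n : ℕ} (v : Fin n → ℂ) : (Fin n → ℂ) → ℂ :=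
  fun z => 1 - (1 / (norm0 v : ℂ)) * ∑ k, ((‖v k‖ : ℂ) / v k) * z k

/-- `gⱼ(z) = 1 - ((1+‖v‖₀-|vⱼ|)/vⱼ) zⱼ + ∑_{k≠j} (|vₖ|/vₖ) zₖ`, for `1 ≤ j ≤ n`. -/
noncomputable def gj {n : ℕ} (v : Fin n → ℂ) (j : Fin n) : (Fin n → ℂ) → ℂ :=
  fun z => 1 - (((1 + norm0 v - ‖v j‖ : ℝ) : ℂ) / v j) * z j
    + ∑ k ∈ Finset.univ.erase j, ((‖v k‖ : ℂ) / v k) * z k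

/-- The family `g₀, g₁, …, gₙ` of the `n+1` affine polynomials associated to `v`. -/
noncomputable def gfam {n : ℕ} (v : Fin n → ℂ) : Fin (n + 1) → (Fin n → ℂ) → ℂ :=
  Fin.cases (gzero v) (gj v)

/-!
The zero set of a product is the union of the zero sets, so the intersection of the nine amoebas
is the union, over the two points `v`, of the intersection of the amoebas of `g₀, g₁, g₂`; it
suffices that the latter is `{Log v}`, which holds in any dimension. If `Log z` lies in all of
them, write `wₖ = |zₖ|`, `aₖ = |vₖ|`, `A = ∑ aₖ`, `S = ∑ wₖ`. The triangle inequality applied to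
`g₀(z) = 0` gives `A ≤ S`, and applied to `gⱼ(z) = 0` gives `(1 + A) wⱼ ≤ aⱼ (1 + S)`. Summing the
latter over `j` yields `S ≤ A`, so `S = A`, hence `wⱼ ≤ aⱼ` for every `j`, and therefore `w = a`.
-/

lemma norm_norm_div_mul {a : ℂ} (ha : a ≠ 0) (z : ℂ) : ‖(‖a‖ : ℂ) / a * z‖ = ‖z‖ := by
  rw [norm_mul, norm_div, Complex.norm_real, norm_norm, div_self (norm_ne_zero_iff.mpr ha), one_mul]

lemma norm0_pos {n : ℕ} [NeZero n] {v : Fin n → ℂ} (hv : ∀ k, v k ≠ 0) : 0 < norm0 v :=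
  Finset.sum_pos (fun k _ => norm_pos_iff.mpr (hv k)) Finset.univ_nonempty

lemma norm_le_norm0 {n : ℕ} (v : Fin n → ℂ) (j : Fin n) : ‖v j‖ ≤ norm0 v :=
  Finset.single_le_sum (fun k _ => norm_nonneg (v k)) (Finset.mem_univ j)

lemma sum_norm_div_mul_self {n : ℕ} {v : Fin n → ℂ} (hv : ∀ k, v k ≠ 0) (s : Finset (Fin n)) :
    ∑ k ∈ s, (‖v k‖ : ℂ) / v k * v k = ∑ k ∈ s, (‖v k‖ : ℂ) :=
  Finset.sum_congr rfl fun k _ => div_mul_cancel₀ _ (hv k)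

lemma gzero_apply_self {n : ℕ} [NeZero n] {v : Fin n → ℂ} (hv : ∀ k, v k ≠ 0) :
    gzero v v = 0 := by
  have hA : (norm0 v : ℂ) ≠ 0 := mod_cast (norm0_pos hv).ne'
  simp only [gzero, sum_norm_div_mul_self hv, norm0, Complex.ofReal_sum] at hA ⊢
  field_simp
  ring

lemma gj_apply_self {n : ℕ} {v : Fin n → ℂ} (hv : ∀ k, v k ≠ 0) (j : Fin n) :
    gj v j v = 0 := by
  have hsum : ∑ k ∈ Finset.univ.erase j, (‖v k‖ : ℂ) = norm0 v - ‖v j‖ := by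
    rw [norm0, Complex.ofReal_sum, ← Finset.add_sum_erase _ _ (Finset.mem_univ j)]
    ring
  rw [gj, sum_norm_div_mul_self hv, hsum, div_mul_cancel₀ _ (hv j)]
  push_cast
  ring

lemma gfam_apply_self {n : ℕ} [NeZero n] {v : Fin n → ℂ} (hv : ∀ k, v k ≠ 0) (j : Fin (n + 1)) :
    gfam v j v = 0 := by
  cases j using Fin.cases with
  | zero => exact gzero_apply_self hv
  | succ j => exact gj_apply_self hv j

lemma norm0_le_sum_norm_of_gzero_eq_zero {n : ℕ} {v : Fin n → ℂ} (hv : ∀ k, v k ≠ 0)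
    {z : Fin n → ℂ} (hz : gzero v z = 0) : norm0 v ≤ ∑ k, ‖z k‖ := by
  set T := ∑ k, (‖v k‖ : ℂ) / v k * z k
  have hA : (norm0 v : ℂ) ≠ 0 := by
    rintro hA
    simp [gzero, hA] at hz
  have hT : T = norm0 v := by
    have h : 1 / (norm0 v : ℂ) * T = 1 := by
      rw [gzero] at hz
      linear_combination -hz
    rwa [one_div, inv_mul_eq_one₀ hA, eq_comm] at h
  have hA₀ : 0 ≤ norm0 v := Finset.sum_nonneg fun k _ => norm_nonneg (v k)
  calc norm0 v = ‖T‖ := by rw [hT, Complex.norm_real, Real.norm_of_nonneg hA₀]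
    _ ≤ ∑ k, ‖(‖v k‖ : ℂ) / v k * z k‖ := norm_sum_le _ _
    _ = ∑ k, ‖z k‖ := by simp only [norm_norm_div_mul (hv _)]

lemma one_add_norm0_mul_le_of_gj_eq_zero {n : ℕ} {v : Fin n → ℂ} (hv : ∀ k, v k ≠ 0)
    {j : Fin n} {z : Fin n → ℂ} (hz : gj v j z = 0) :
    (1 + norm0 v) * ‖z j‖ ≤ ‖v j‖ * (1 + ∑ k, ‖z k‖) := by
  have hc : 0 < 1 + norm0 v - ‖v j‖ := by linarith [norm_le_norm0 v j]
  have hvj : 0 < ‖v j‖ := norm_pos_iff.mpr (hv j)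
  have hzj : (((1 + norm0 v - ‖v j‖ : ℝ) : ℂ) / v j) * z j
      = 1 + ∑ k ∈ Finset.univ.erase j, (‖v k‖ : ℂ) / v k * z k := by
    rw [gj] at hz
    linear_combination -hz
  have hnorm : (1 + norm0 v - ‖v j‖) / ‖v j‖ * ‖z j‖
      ≤ 1 + (∑ k, ‖z k‖ - ‖z j‖) := by
    calc (1 + norm0 v - ‖v j‖) / ‖v j‖ * ‖z j‖
        = ‖1 + ∑ k ∈ Finset.univ.erase j, (‖v k‖ : ℂ) / v k * z k‖ := by
          rw [← hzj, norm_mul, norm_div, Complex.norm_real, Real.norm_of_nonneg hc.le]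
      _ ≤ 1 + ∑ k ∈ Finset.univ.erase j, ‖z k‖ := by
          refine (norm_add_le _ _).trans ?_
          rw [norm_one]
          gcongr
          refine (norm_sum_le _ _).trans_eq ?_
          simp only [norm_norm_div_mul (hv _)]
      _ = 1 + (∑ k, ‖z k‖ - ‖z j‖) := by
          rw [← Finset.add_sum_erase _ _ (Finset.mem_univ j)]
          ring
  rw [div_mul_eq_mul_div, div_le_iff₀ hvj] at hnorm
  linarith

lemma eq_of_sum_le_sum_of_one_add_sum_mul_le {ι : Type*} {s : Finset ι} {a w : ι → ℝ}
    (ha : ∀ i ∈ s, 0 ≤ a i) (hsum : ∑ i ∈ s, a i ≤ ∑ i ∈ s, w i)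
    (hw : ∀ i ∈ s, (1 + ∑ i ∈ s, a i) * w i ≤ a i * (1 + ∑ i ∈ s, w i)) :
    ∀ i ∈ s, w i = a i := by
  set A := ∑ i ∈ s, a i
  set S := ∑ i ∈ s, w i
  have hA : 0 ≤ A := Finset.sum_nonneg ha
  have hSA : S = A := by
    have := Finset.sum_le_sum hw
    rw [← Finset.mul_sum, ← Finset.sum_mul] at this
    linarith
  have hle : ∀ i ∈ s, w i ≤ a i := fun i hi => by
    have := hw i hi
    rw [hSA] at this
    nlinarith
  exact (Finset.sum_eq_sum_iff_of_le hle).mp hSA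

lemma exists_norm_eq_exp_of_mem_amoeba {n : ℕ} {f : (Fin n → ℂ) → ℂ} {x : Fin n → ℝ}
    (hx : x ∈ amoeba f) : ∃ z, f z = 0 ∧ ∀ k, ‖z k‖ = Real.exp (x k) := by
  obtain ⟨z, ⟨hz, hfz⟩, rfl⟩ := hx
  exact ⟨z, hfz, fun k => (Real.exp_log (norm_pos_iff.mpr (hz k))).symm⟩

lemma eq_Log_of_forall_mem_amoeba_gfam {n : ℕ} {v : Fin n → ℂ} (hv : ∀ k, v k ≠ 0)
    {x : Fin n → ℝ} (hx : ∀ j, x ∈ amoeba (gfam v j)) : x = Log v := by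
  obtain ⟨z₀, hz₀, hw₀⟩ := exists_norm_eq_exp_of_mem_amoeba (hx 0)
  have hsum : norm0 v ≤ ∑ k, Real.exp (x k) := by
    simpa only [hw₀] using norm0_le_sum_norm_of_gzero_eq_zero hv hz₀
  have hj : ∀ j ∈ Finset.univ, (1 + norm0 v) * Real.exp (x j)
      ≤ ‖v j‖ * (1 + ∑ k, Real.exp (x k)) := fun j _ => by
    obtain ⟨z, hz, hw⟩ := exists_norm_eq_exp_of_mem_amoeba (hx j.succ)
    simpa only [hw] using one_add_norm0_mul_le_of_gj_eq_zero hv hz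
  have heq := eq_of_sum_le_sum_of_one_add_sum_mul_le (fun k _ => norm_nonneg (v k)) hsum hj
  funext k
  rw [Log, ← heq k (Finset.mem_univ k), Real.log_exp]

theorem iInter_amoeba_gfam {n : ℕ} [NeZero n] {v : Fin n → ℂ} (hv : ∀ k, v k ≠ 0) :
    ⋂ j, amoeba (gfam v j) = {Log v} := by
  refine Set.Subset.antisymm (fun x hx => eq_Log_of_forall_mem_amoeba_gfam hv
    (Set.mem_iInter.mp hx)) ?_
  rintro _ rfl
  exact Set.mem_iInter.mpr fun j => ⟨v, ⟨hv, gfam_apply_self hv j⟩, rfl⟩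

lemma amoeba_mul {n : ℕ} (f g : (Fin n → ℂ) → ℂ) :
    amoeba (fun z => f z * g z) = amoeba f ∪ amoeba g := by
  rw [amoeba, amoeba, amoeba, ← Set.image_union]
  congr 1
  ext z
  simp only [Set.mem_ofPred_eq, Set.mem_union, mul_eq_zero, and_or_left]

lemma iInter_iInter_amoeba_mul {n : ℕ} {ι κ : Type*} (f : ι → (Fin n → ℂ) → ℂ)
    (g : κ → (Fin n → ℂ) → ℂ) :
    ⋂ i, ⋂ j, amoeba (fun z => f i z * g j z) = (⋂ i, amoeba (f i)) ∪ ⋂ j, amoeba (g j) := by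
  rw [Set.iInter_union]
  simp only [Set.union_iInter, amoeba_mul]

theorem example_two_points_general (v1 v2 : Fin 2 → ℂ)
    (hv1 : ∀ k, v1 k ≠ 0) (hv2 : ∀ k, v2 k ≠ 0) :
    (⋂ j : Fin 3, ⋂ r : Fin 3, amoeba (fun z => gfam v1 j z * gfam v2 r z))
      = {Log v1, Log v2} ∧
    ∀ j r : Fin 3, gfam v1 j v1 * gfam v2 r v1 = 0 ∧ gfam v1 j v2 * gfam v2 r v2 = 0 := by
  refine ⟨?_, fun j r => ⟨?_, ?_⟩⟩
  · rw [iInter_iInter_amoeba_mul, iInter_amoeba_gfam hv1, iInter_amoeba_gfam hv2, Set.singleton_union]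
  · rw [gfam_apply_self hv1 j, zero_mul]
  · rw [gfam_apply_self hv2 r, mul_zero]

theorem example_two_points (v1 v2 : Fin 2 → ℂ)
    (hv1 : ∀ k, v1 k ≠ 0) (hv2 : ∀ k, v2 k ≠ 0) (hne : v1 ≠ v2) :
    (⋂ j : Fin 3, ⋂ r : Fin 3, amoeba (fun z => gfam v1 j z * gfam v2 r z))
      = {Log v1, Log v2} ∧
    ∀ j r : Fin 3, gfam v1 j v1 * gfam v2 r v1 = 0 ∧ gfam v1 j v2 * gfam v2 r v2 = 0 :=
  example_two_points_general v1 v2 hv1 hv2
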